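/- arXiv:2503.20694 — 2 statements merged into one kernel-verified Lean document; each statement's English description precedes it below -/
import Mathlib

section
/- The scaled delay Vandermonde matrix admits the sparse factorization Ã_N = D̂_N · Jᵀ · F_M* · D̆_M · F_M · J · D̂_N, where M = 2N, D̂_N = diag(β^{k²})_{k=0}^{N-1} for β with β² = α, D̆_M = diag(√M · F_M c) with c the first column of the circulant embedding of the Toeplitz matrix with entries β^{-(k-l)²}, and J = [I_N; 0_N]; here Ã_N has entries α^{kl}. -/
/-!
Bluestein's chirp trick: `2kl = k² + l² - (k - l)²` gives `α^{kl} = β^{k²} β^{-(k-l)²} β^{l²}`,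
so `Ã_N = D̂_N T D̂_N` with `T` the symmetric Toeplitz matrix `(β^{-(k-l)²})`. Since `T` is
symmetric, it is the upper-left block `Jᵀ C J` of the circulant `C` with first column `c`, and the
DFT diagonalises every circulant, `C = F_M* diag(√M F_M c) F_M`, by the orthogonality of the
characters `m ↦ ω^{jm}` of `ℤ/Mℤ`.
-/

open Complex

theorem IsPrimitiveRoot.sum_zpow_mul {K : Type*} [Field K] {M : ℕ} {ω : K}
    (hω : IsPrimitiveRoot ω M) (t : ℤ) :
    ∑ m : Fin M, ω ^ ((m : ℤ) * t) = if (M : ℤ) ∣ t then (M : K) else 0 := by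
  have hpow : ∀ m : Fin M, ω ^ ((m : ℤ) * t) = (ω ^ t) ^ (m : ℕ) := fun m => by
    rw [mul_comm, zpow_mul, zpow_natCast]
  rw [Finset.sum_congr rfl fun m _ => hpow m, Fin.sum_univ_eq_sum_range (fun m => (ω ^ t) ^ m) M]
  split_ifs with h
  · simp [(hω.zpow_eq_one_iff_dvd t).2 h]
  · have hne : ω ^ t ≠ 1 := mt (hω.zpow_eq_one_iff_dvd t).1 h
    rw [geom_sum_eq hne, ← zpow_natCast, ← zpow_mul, mul_comm, zpow_mul, zpow_natCast,
      hω.pow_eq_one, one_zpow, sub_self, zero_div]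

theorem Fin.intCast_dvd_add_sub_iff {M : ℕ} (p i j : Fin M) :
    (M : ℤ) ∣ p + j - i ↔ p = i - j := by
  have hdvd : (M : ℤ) ∣ (i - j : Fin M) + j - i := by
    rw [Fin.intCast_val_sub_eq_sub_add_ite]
    split_ifs
    exacts [⟨0, by ring⟩, ⟨1, by ring⟩]
  refine ⟨fun hp => ?_, fun hp => hp ▸ hdvd⟩
  have hdiff : (M : ℤ) ∣ (p : ℤ) - (i - j : Fin M) := by
    rw [show (p : ℤ) - (i - j : Fin M) = (p + j - i) - ((i - j : Fin M) + j - i) by ring]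
    exact dvd_sub hp hdvd
  have := Int.eq_zero_of_dvd_of_natAbs_lt_natAbs hdiff (by omega)
  exact Fin.ext (by omega)

open Matrix

def dftMatrix {R : Type*} [Monoid R] (ω : R) (M : ℕ) : Matrix (Fin M) (Fin M) R :=
  of fun j k => ω ^ ((j : ℕ) * (k : ℕ))

theorem dftMatrix_conjTranspose {R : Type*} [CommMonoid R] [StarMul R] (ω : R) (M : ℕ) :
    (dftMatrix ω M)ᴴ = dftMatrix (star ω) M := by
  ext j k
  simp [dftMatrix, star_pow, mul_comm]

theorem dftMatrix_inv_mul_diagonal_mul {K : Type*} [Field K] {M : ℕ} {ω : K}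
    (hω : IsPrimitiveRoot ω M) (c : Fin M → K) :
    dftMatrix ω⁻¹ M * diagonal (dftMatrix ω M *ᵥ c) * dftMatrix ω M = (M : K) • circulant c := by
  ext i j
  have hω0 : ω ≠ 0 := hω.ne_zero i.pos.ne'
  have hexp : ∀ m p : Fin M, ω⁻¹ ^ ((i : ℕ) * m) * ω ^ ((m : ℕ) * p) * ω ^ ((m : ℕ) * j) =
      ω ^ ((m : ℤ) * (p + j - i)) := by
    intro m p
    rw [← zpow_natCast, ← zpow_natCast, ← zpow_natCast, _root_.inv_zpow', ← zpow_add₀ hω0,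
      ← zpow_add₀ hω0]
    congr 1; push_cast; ring
  calc _ = ∑ p, c p * ∑ m : Fin M, ω ^ ((m : ℤ) * (p + j - i)) := by
        rw [mul_apply]
        simp only [mul_diagonal, dftMatrix, of_apply, mulVec, dotProduct, Finset.sum_mul,
          Finset.mul_sum]
        rw [Finset.sum_comm]
        refine Finset.sum_congr rfl fun p _ => Finset.sum_congr rfl fun m _ => ?_
        rw [← hexp]; ring
    _ = ∑ p, c p * if p = i - j then (M : K) else 0 := by
        simp_rw [hω.sum_zpow_mul, Fin.intCast_dvd_add_sub_iff]
    _ = _ := by simp [circulant_apply, mul_comm]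

theorem isPrimitiveRoot_exp_neg {M : ℕ} (hM : M ≠ 0) :
    IsPrimitiveRoot (exp (-2 * Real.pi * I / M)) M := by
  rw [show -2 * Real.pi * I / M = -(2 * Real.pi * I / M) by ring, exp_neg]
  exact (isPrimitiveRoot_exp M hM).inv

theorem star_exp_neg_two_pi_I_div_eq_inv (M : ℕ) :
    star (exp (-2 * Real.pi * I / M)) = (exp (-2 * Real.pi * I / M))⁻¹ := by
  rw [← exp_neg, star_def, ← exp_conj]
  simp only [map_div₀, map_mul, map_neg, map_ofNat, conj_I, conj_ofReal, map_natCast]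
  ring_nf

noncomputable def unitaryDFT (M : ℕ) : Matrix (Fin M) (Fin M) ℂ :=
  (Real.sqrt M : ℂ)⁻¹ • dftMatrix (exp (-2 * Real.pi * I / M)) M

theorem unitaryDFT_conjTranspose_mul_diagonal_mul (M : ℕ) (c : Fin M → ℂ) :
    (unitaryDFT M)ᴴ * diagonal (fun l => (Real.sqrt M : ℂ) * (unitaryDFT M *ᵥ c) l) *
      unitaryDFT M = circulant c := by
  rcases eq_or_ne M 0 with rfl | hM
  · ext i; exact i.elim0
  unfold unitaryDFT
  set s : ℂ := (Real.sqrt M : ℂ)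
  set ω : ℂ := exp (-2 * Real.pi * I / M)
  have hs : s ≠ 0 := ofReal_ne_zero.2 (Real.sqrt_ne_zero'.2 (by positivity))
  have hss : s * s = M := by
    rw [← ofReal_mul, Real.mul_self_sqrt (Nat.cast_nonneg _), ofReal_natCast]
  have hdiag : (fun l => s * ((s⁻¹ • dftMatrix ω M) *ᵥ c) l) = dftMatrix ω M *ᵥ c := by
    ext l
    simp [smul_mulVec, hs]
  rw [hdiag, conjTranspose_smul, dftMatrix_conjTranspose, star_exp_neg_two_pi_I_div_eq_inv,
    smul_mul, smul_mul, Matrix.mul_smul, dftMatrix_inv_mul_diagonal_mul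
      (isPrimitiveRoot_exp_neg hM), smul_smul, smul_smul]
  have hstar : star s⁻¹ = s⁻¹ := by simp [s, conj_ofReal]
  rw [hstar, ← hss, show s⁻¹ * s⁻¹ * (s * s) = 1 by field_simp, one_smul]

theorem transpose_mul_mul_eq_submatrix_castLE {R : Type*} [CommSemiring R] {m n : ℕ}
    (h : m ≤ n) (J : Matrix (Fin n) (Fin m) R)
    (hJ : ∀ k l, J k l = if (k : ℕ) = (l : ℕ) then 1 else 0) (X : Matrix (Fin n) (Fin n) R) :
    Jᵀ * X * J = X.submatrix (Fin.castLE h) (Fin.castLE h) := by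
  have hJ' : J = of fun k l => if k = Fin.castLE h l then 1 else 0 := by
    ext k l; simp [hJ, Fin.ext_iff]
  ext k l
  simp [hJ', mul_apply]

theorem circulant_apply_castLE {R : Type*} {N : ℕ} (t : ℤ → R) (ht : ∀ x, t (-x) = t x)
    (c : Fin (2 * N) → R) (hc_lt : ∀ m : Fin (2 * N), (m : ℕ) < N → c m = t m)
    (hc_gt : ∀ m : Fin (2 * N), N < (m : ℕ) → c m = t (2 * N - m)) (k l : Fin N) :
    circulant c (Fin.castLE (by omega) k) (Fin.castLE (by omega) l) = t (k - l) := by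
  rw [circulant_apply]
  set d := Fin.castLE (by omega : N ≤ 2 * N) k - Fin.castLE (by omega) l
  have hd := Fin.intCast_val_sub_eq_sub_add_ite (Fin.castLE (by omega : N ≤ 2 * N) k)
    (Fin.castLE (by omega) l)
  simp only [Fin.val_castLE, Fin.le_iff_val_le_val] at hd
  split_ifs at hd with hlk
  · rw [hc_lt d (by omega)]; congr 1; omega
  · rw [hc_gt d (by omega), ← ht]; congr 1; omega

theorem bluestein_identity {K : Type*} [DivisionRing K] {β : K} (hβ : β ≠ 0) (k l : ℤ) :
    (β ^ 2) ^ (k * l) = β ^ (k ^ 2) * β ^ (-(k - l) ^ 2) * β ^ (l ^ 2) := by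
  rw [← zpow_natCast, ← _root_.zpow_mul, ← zpow_add₀ hβ, ← zpow_add₀ hβ]
  congr 1; push_cast; ring

theorem dvm_sparse_factorization_general (N : ℕ) (α β : ℂ) (hα : α ≠ 0)
    (hβ : β ^ 2 = α)
    (A : Matrix (Fin N) (Fin N) ℂ)
    (hA : ∀ k l : Fin N, A k l = α ^ ((k : ℤ) * (l : ℤ)))
    (F : Matrix (Fin (2 * N)) (Fin (2 * N)) ℂ)
    (hF : ∀ k l : Fin (2 * N), F k l =
      (1 / (Real.sqrt (2 * N) : ℂ)) *
        Complex.exp (-2 * Real.pi * I / (2 * N)) ^ ((k : ℕ) * (l : ℕ)))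
    (c : Fin (2 * N) → ℂ)
    (hc₁ : ∀ m : Fin (2 * N), (m : ℕ) < N → c m = β ^ (-(m : ℤ) ^ 2))
    (hc₃ : ∀ m : Fin (2 * N), N < (m : ℕ) → c m = β ^ (-(2 * (N : ℤ) - (m : ℤ)) ^ 2))
    (J : Matrix (Fin (2 * N)) (Fin N) ℂ)
    (hJ : ∀ k l, J k l = if (k : ℕ) = (l : ℕ) then 1 else 0) :
    A = Matrix.diagonal (fun k : Fin N => β ^ ((k : ℤ) ^ 2)) * J.transpose *
        F.conjTranspose *
        Matrix.diagonal (fun l : Fin (2 * N) => (Real.sqrt (2 * N) : ℂ) * (F.mulVec c) l) *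
        F * J * Matrix.diagonal (fun k : Fin N => β ^ ((k : ℤ) ^ 2)) := by
  have hβ0 : β ≠ 0 := by rintro rfl; exact hα (by simp [← hβ])
  have hFM : F = unitaryDFT (2 * N) := by
    ext k l; rw [hF]; simp [unitaryDFT, dftMatrix]
  have hcirc :
      Fᴴ * diagonal (fun l => (Real.sqrt (2 * N) : ℂ) * (F *ᵥ c) l) * F = circulant c := by
    subst hFM; exact_mod_cast unitaryDFT_conjTranspose_mul_diagonal_mul (2 * N) c
  have htoep := circulant_apply_castLE (fun x : ℤ => β ^ (-x ^ 2)) (fun x => by rw [neg_sq])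
    c hc₁ hc₃
  calc A
      = diagonal (fun k : Fin N => β ^ ((k : ℤ) ^ 2)) * (Jᵀ * circulant c * J) *
          diagonal (fun k : Fin N => β ^ ((k : ℤ) ^ 2)) := by
        ext k l
        rw [transpose_mul_mul_eq_submatrix_castLE (by omega) J hJ, mul_diagonal, diagonal_mul,
            submatrix_apply, htoep, hA, ← hβ, bluestein_identity hβ0]
    _ = _ := by rw [← hcirc]; simp only [Matrix.mul_assoc]

/-- Sparse factorization of the scaled delay Vandermonde matrix:
`Ã_N = D̂_N · Jᵀ · F_M* · D̆_M · F_M · J · D̂_N` with `M = 2N`,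
`D̂_N = diag(β^{k²})`, `D̆_M = diag(√M · F_M c)` with `c` the circulant first column,
and `J = [I_N; 0_N]`. -/
theorem dvm_sparse_factorization (N : ℕ) (hN : 1 ≤ N) (α β : ℂ) (hα : α ≠ 0)
    (hβ : β ^ 2 = α)
    (A : Matrix (Fin N) (Fin N) ℂ)
    (hA : ∀ k l : Fin N, A k l = α ^ ((k : ℤ) * (l : ℤ)))
    (F : Matrix (Fin (2 * N)) (Fin (2 * N)) ℂ)
    (hF : ∀ k l : Fin (2 * N), F k l =
      (1 / (Real.sqrt (2 * N) : ℂ)) *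
        Complex.exp (-2 * Real.pi * I / (2 * N)) ^ ((k : ℕ) * (l : ℕ)))
    (c : Fin (2 * N) → ℂ)
    (hc₁ : ∀ m : Fin (2 * N), (m : ℕ) < N → c m = β ^ (-(m : ℤ) ^ 2))
    (hc₂ : ∀ m : Fin (2 * N), (m : ℕ) = N → c m = 1)
    (hc₃ : ∀ m : Fin (2 * N), N < (m : ℕ) → c m = β ^ (-(2 * (N : ℤ) - (m : ℤ)) ^ 2))
    (J : Matrix (Fin (2 * N)) (Fin N) ℂ)
    (hJ : ∀ k l, J k l = if (k : ℕ) = (l : ℕ) then 1 else 0) :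
    A = Matrix.diagonal (fun k : Fin N => β ^ ((k : ℤ) ^ 2)) * J.transpose *
        F.conjTranspose *
        Matrix.diagonal (fun l : Fin (2 * N) => (Real.sqrt (2 * N) : ℂ) * (F.mulVec c) l) *
        F * J * Matrix.diagonal (fun k : Fin N => β ^ ((k : ℤ) ^ 2)) :=
  dvm_sparse_factorization_general N α β hα hβ A hA F hF c hc₁ hc₃ J hJ
end

section
/- The total FLOP count of an StNN with λ recursive steps, #a_λ + #m_λ = p(L−1)[2M²/2^{λ−1} + (7/4)λM + (15/4)M], is strictly less than the fully-connected count Θ(M²L) for sufficiently large M when λ grows like log₂ M; precisely, for λ = log₂ M, #a_λ + #m_λ ≤ C·p·L·M·log₂ M for an explicit constant C, while a fully connected L-layer network with layer widths proportional to M requires at least M² multiplications per layer. -/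
/-! With `M = 2^s` and `λ = s`, the quadratic terms `M²/2^{λ-1} = 2M` collapse to linear ones, so
the total cost is `p(L-1) M (31/4 + 7/4 log₂ M)`. Relative to `M² L` this is
`(p(L-1)/L) · (31/4 + 7/4 s)/2^s`, and an affine function of `s` is killed by `2^s`. -/

open Filter Topology

lemma sq_two_pow_div_two_pow_pred {s : ℕ} (hs : 1 ≤ s) :
    ((2 : ℝ) ^ s) ^ 2 / 2 ^ (s - 1) = 2 * 2 ^ s := by
  obtain ⟨t, rfl⟩ := Nat.exists_eq_add_of_le' hs
  rw [Nat.add_sub_cancel, div_eq_iff (by positivity)]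
  ring

lemma tendsto_affine_div_two_pow (α β : ℝ) :
    Tendsto (fun s : ℕ => (α + β * s) / 2 ^ s) atTop (𝓝 0) := by
  have h₀ := (tendsto_pow_const_div_const_pow_of_one_lt 0 one_lt_two).const_mul α
  have h₁ := (tendsto_pow_const_div_const_pow_of_one_lt 1 one_lt_two).const_mul β
  convert h₀.add h₁ using 2 with s
  · ring
  · simp

theorem stnn_flops_beat_fully_connected_general (p L : ℕ) (a m : ℕ → ℝ)
    (ha : ∀ s : ℕ, a s = (p : ℝ) * (L - 1) * ((2 : ℝ) ^ s) ^ 2 / 2 ^ (s - 1) +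
      (p : ℝ) * s * (L - 1) * 2 ^ s + 3 / 4 * p * (L - 1) * 2 ^ s)
    (hm : ∀ s : ℕ, m s = (p : ℝ) * (L - 1) * ((2 : ℝ) ^ s) ^ 2 / 2 ^ (s - 1) +
      3 * p * 2 ^ s * (L - 1) + 3 / 4 * p * s * (L - 1) * 2 ^ s) :
    (∀ s : ℕ, 1 ≤ s → a s + m s =
      (p : ℝ) * (L - 1) * (2 * ((2 : ℝ) ^ s) ^ 2 / 2 ^ (s - 1) +
        7 / 4 * s * 2 ^ s + 15 / 4 * 2 ^ s)) ∧
    (∀ s : ℕ, 1 ≤ s → a s + m s ≤ 10 * (p : ℝ) * L * 2 ^ s * s) ∧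
    Tendsto (fun s : ℕ => (a s + m s) / (((2 : ℝ) ^ s) ^ 2 * L)) atTop (nhds 0) := by
  have hsum : ∀ s : ℕ, 1 ≤ s → a s + m s = p * (L - 1) * 2 ^ s * (31 / 4 + 7 / 4 * s) := by
    intro s hs
    simp only [ha, hm, mul_div_assoc, sq_two_pow_div_two_pow_pred hs]
    ring
  refine ⟨fun s hs => ?_, fun s hs => ?_, ?_⟩
  · rw [hsum s hs, mul_div_assoc, sq_two_pow_div_two_pow_pred hs]
    ring
  · have hs' : (1 : ℝ) ≤ s := by exact_mod_cast hs
    calc a s + m s = p * (L - 1) * 2 ^ s * (31 / 4 + 7 / 4 * s) := hsum s hs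
      _ ≤ p * L * 2 ^ s * (10 * s) := by gcongr <;> linarith
      _ = 10 * p * L * 2 ^ s * s := by ring
  · have hratio : ∀ᶠ s : ℕ in atTop,
        p * (L - 1) / L * ((31 / 4 + 7 / 4 * s) / 2 ^ s) = (a s + m s) / ((2 ^ s) ^ 2 * L) := by
      filter_upwards [eventually_ge_atTop 1] with s hs
      rw [hsum s hs, div_mul_div_comm, sq]
      field_simp
    simpa using ((tendsto_affine_div_two_pow _ _).const_mul _).congr' hratio

/-- Total FLOP count of the StNN with `λ = log₂ M = s` recursive steps:
`#a_λ + #m_λ = p(L−1)(2M²/2^{λ−1} + (7/4)λM + (15/4)M)`; it is bounded by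
`C·p·L·M·log₂ M` with the explicit constant `C = 10`, and is asymptotically
negligible compared to the fully connected cost `Θ(M²L)` (which needs `M²`
multiplications per fully connected layer): the ratio tends to `0`. -/
theorem stnn_flops_beat_fully_connected (p L : ℕ) (hp : 1 ≤ p) (hL5 : 5 ≤ L)
    (hL : 4 ∣ (L - 1)) (a m : ℕ → ℝ)
    (ha : ∀ s : ℕ, a s = (p : ℝ) * (L - 1) * ((2 : ℝ) ^ s) ^ 2 / 2 ^ (s - 1) +
      (p : ℝ) * s * (L - 1) * 2 ^ s + 3 / 4 * p * (L - 1) * 2 ^ s)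
    (hm : ∀ s : ℕ, m s = (p : ℝ) * (L - 1) * ((2 : ℝ) ^ s) ^ 2 / 2 ^ (s - 1) +
      3 * p * 2 ^ s * (L - 1) + 3 / 4 * p * s * (L - 1) * 2 ^ s) :
    (∀ s : ℕ, 1 ≤ s → a s + m s =
      (p : ℝ) * (L - 1) * (2 * ((2 : ℝ) ^ s) ^ 2 / 2 ^ (s - 1) +
        7 / 4 * s * 2 ^ s + 15 / 4 * 2 ^ s)) ∧
    (∀ s : ℕ, 1 ≤ s → a s + m s ≤ 10 * (p : ℝ) * L * 2 ^ s * s) ∧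
    Tendsto (fun s : ℕ => (a s + m s) / (((2 : ℝ) ^ s) ^ 2 * L)) atTop (nhds 0) :=
  stnn_flops_beat_fully_connected_general p L a m ha hm
end
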